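/- For every valid operation list ops : List (Option α), the sequence of dequeued values is an initial segment of the sequence of enqueued values: dequeuedRun ops is a prefix of enqueuedRun ops, where enqueuedRun ops is the list of the values a of the `some a` operations of ops, in order of occurrence. In particular, for every d, the d-th dequeue operation removes exactly the value inserted by the d-th enqueue operation, so a value enqueued strictly earlier is dequeued strictly earlier. -/

import Mathlib

/-- One step of FIFO queue execution: `some a` enqueues `a` at the back,
`none` dequeues the front element (tail of the empty list is empty). -/
def queueStep {α : Type*} (s : List α) : Option α → List α
  | some a => s ++ [a]
  | none => s.tail

/-- The final queue state after executing the operation list `ops`,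
starting from the empty queue. -/
def queueRun {α : Type*} (ops : List (Option α)) : List α :=
  ops.foldl queueStep []

/-- An operation list is valid when no dequeue is performed on an empty queue:
for every prefix ending in `none`, the queue state just before that `none`
is nonempty. -/
def queueValid {α : Type*} (ops : List (Option α)) : Prop :=
  ∀ pre : List (Option α), pre ++ [none] <+: ops → queueRun pre ≠ []

/-- The values dequeued by the `none` operations, starting from queue state `s`,
in order of occurrence. -/
def dequeuedAux {α : Type*} : List α → List (Option α) → List α
  | _, [] => []
  | s, some a :: ops => dequeuedAux (s ++ [a]) ops
  | s, none :: ops => s.take 1 ++ dequeuedAux s.tail ops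

/-- The sequence of values dequeued while executing `ops` from the empty queue. -/
def dequeuedRun {α : Type*} (ops : List (Option α)) : List α :=
  dequeuedAux [] ops

/-- The values enqueued by the `some` operations of `ops`, in order of occurrence. -/
def enqueuedRun {α : Type*} (ops : List (Option α)) : List α :=
  ops.filterMap id

/- A dequeue moves the front element from the queue to the output and does nothing on an empty
queue, so only enqueues change the output followed by the queue, each appending its value. -/
theorem dequeuedAux_append_foldl_queueStep {α : Type*} (s : List α) (ops : List (Option α)) :
    dequeuedAux s ops ++ ops.foldl queueStep s = s ++ enqueuedRun ops := by
  induction ops generalizing s with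
  | nil => simp [dequeuedAux, enqueuedRun]
  | cons o ops ih =>
    cases o with
    | some a => simpa [dequeuedAux, enqueuedRun, queueStep] using ih (s ++ [a])
    | none =>
      cases s with
      | nil => simpa [dequeuedAux, enqueuedRun, queueStep] using ih []
      | cons x t => simpa [dequeuedAux, enqueuedRun, queueStep] using ih t

theorem dequeuedRun_isPrefix_enqueuedRun_general {α : Type*} (ops : List (Option α)) :
    dequeuedRun ops <+: enqueuedRun ops :=
  ⟨queueRun ops, dequeuedAux_append_foldl_queueStep [] ops⟩

/-- FIFO property: for a valid operation list, the sequence of dequeued values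
is an initial segment of the sequence of enqueued values, so the `d`-th dequeue
removes exactly the value inserted by the `d`-th enqueue. -/
theorem dequeuedRun_isPrefix_enqueuedRun {α : Type*} (ops : List (Option α))
    (hvalid : queueValid ops) :
    dequeuedRun ops <+: enqueuedRun ops :=
  dequeuedRun_isPrefix_enqueuedRun_general ops
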